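/- arXiv:2207.10214 — 3 statements merged into one kernel-verified Lean document; each statement's English description precedes it below -/
import Mathlib

section
/- Let n ≥ 2 and let a : ℝ → ℝ^{n-1} and b : ℝ → ℝⁿ be differentiable curves. For each t, let L(t) be the symmetric tridiagonal n×n real matrix with diagonal entries L(t)_{kk} = b_k(t), off-diagonal entries L(t)_{k,k+1} = L(t)_{k+1,k} = a_k(t), and all other entries 0; and let M(t) be the skew-symmetric tridiagonal n×n matrix with M(t)_{k,k+1} = a_k(t), M(t)_{k+1,k} = −a_k(t), and all other entries 0. Then a and b satisfy the Toda system ȧ_k = −a_k(b_{k+1} − b_k) for 1 ≤ k ≤ n−1 and ḃ_k = −2(a_k² − a_{k-1}²) for 1 ≤ k ≤ n (with the convention a_0 = a_n = 0) if and only if L satisfies the Lax equation L̇(t) = L(t)M(t) − M(t)L(t) for all t. -/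
open Matrix

/-- The symmetric tridiagonal Toda Lax matrix with 1-indexed diagonal entries
`b 1, …, b n` and off-diagonal entries `a 1, …, a (n-1)`. -/
def todaL (n : ℕ) (a b : ℕ → ℝ) : Matrix (Fin n) (Fin n) ℝ :=
  Matrix.of fun i j =>
    if (i : ℕ) = (j : ℕ) then b ((i : ℕ) + 1)
    else if (i : ℕ) + 1 = (j : ℕ) then a ((i : ℕ) + 1)
    else if (j : ℕ) + 1 = (i : ℕ) then a ((j : ℕ) + 1)
    else 0

/-- The skew-symmetric tridiagonal matrix `M` with `M_{k,k+1} = a_k`,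
`M_{k+1,k} = -a_k` (1-indexed). -/
def todaM (n : ℕ) (a : ℕ → ℝ) : Matrix (Fin n) (Fin n) ℝ :=
  Matrix.of fun i j =>
    if (i : ℕ) + 1 = (j : ℕ) then a ((i : ℕ) + 1)
    else if (j : ℕ) + 1 = (i : ℕ) then -(a ((j : ℕ) + 1))
    else 0

set_option linter.unreachableTactic false
set_option linter.unusedTactic false

noncomputable def Lf (a b : ℕ → ℝ) (i j : ℕ) : ℝ :=
  if i = j then b (i + 1)
  else if i + 1 = j then a (i + 1)
  else if j + 1 = i then a (j + 1)
  else 0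

noncomputable def Mf (a : ℕ → ℝ) (i j : ℕ) : ℝ :=
  if i + 1 = j then a (i + 1)
  else if j + 1 = i then -(a (j + 1))
  else 0

noncomputable def Cf (n : ℕ) (a b : ℕ → ℝ) (i j : ℕ) : ℝ :=
  if i = j then
    -2 * ((if i + 1 ≤ n - 1 then a (i + 1) else 0) ^ 2
      - (if 2 ≤ i + 1 then a (i + 1 - 1) else 0) ^ 2)
  else if i + 1 = j then -(a (i + 1)) * (b (i + 1 + 1) - b (i + 1))
  else if j + 1 = i then -(a (j + 1)) * (b (j + 1 + 1) - b (j + 1))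
  else 0

@[simp] lemma Lf_diag (a b : ℕ → ℝ) (i : ℕ) : Lf a b i i = b (i + 1) := by
  simp [Lf]

@[simp] lemma Lf_up (a b : ℕ → ℝ) (i : ℕ) : Lf a b i (i + 1) = a (i + 1) := by
  simp [Lf]

@[simp] lemma Lf_down (a b : ℕ → ℝ) (i : ℕ) : Lf a b (i + 1) i = a (i + 1) := by
  unfold Lf
  rw [if_neg (by omega), if_neg (by omega), if_pos rfl]

@[simp] lemma Lf_up2 (a b : ℕ → ℝ) (i : ℕ) : Lf a b i (i + 2) = 0 := by
  unfold Lf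
  rw [if_neg (by omega), if_neg (by omega), if_neg (by omega)]

@[simp] lemma Lf_down2 (a b : ℕ → ℝ) (i : ℕ) : Lf a b (i + 2) i = 0 := by
  unfold Lf
  rw [if_neg (by omega), if_neg (by omega), if_neg (by omega)]

lemma Lf_far (a b : ℕ → ℝ) {i j : ℕ} (h1 : i ≠ j) (h2 : i + 1 ≠ j) (h3 : j + 1 ≠ i) :
    Lf a b i j = 0 := by
  unfold Lf
  rw [if_neg h1, if_neg h2, if_neg h3]

lemma sum_shift (n j : ℕ) (F : ℕ → ℝ) :
    (∑ k ∈ Finset.range n, if k + 1 = j then F k else 0)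
      = if 1 ≤ j ∧ j ≤ n then F (j - 1) else 0 := by
  rcases j with _ | j
  · simp
  · have h : ∀ k, (if k + 1 = j + 1 then F k else 0) = if j = k then F k else 0 := by
      intro k
      by_cases hk : k = j
      · subst hk; simp
      · rw [if_neg (by omega), if_neg (by omega)]
    simp only [h, Finset.sum_ite_eq, Finset.mem_range]
    rcases lt_or_ge j n with hh | hh
    · rw [if_pos hh, if_pos ⟨by omega, by omega⟩, Nat.add_sub_cancel]
    · rw [if_neg (by omega), if_neg (by omega)]

lemma sum_pick (n j : ℕ) (F : ℕ → ℝ) :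
    (∑ k ∈ Finset.range n, if j + 1 = k then F k else 0)
      = if j + 1 < n then F (j + 1) else 0 := by
  simp only [Finset.sum_ite_eq, Finset.mem_range]

set_option maxHeartbeats 1600000 in
lemma key (n i j : ℕ) (hi : i < n) (hj : j < n) (a b : ℕ → ℝ) :
    ((if 1 ≤ j ∧ j ≤ n then Lf a b i (j - 1) * a j else 0)
        + (if j + 1 < n then -(Lf a b i (j + 1) * a (j + 1)) else 0))
      - ((if i + 1 < n then a (i + 1) * Lf a b (i + 1) j else 0)
        + (if 1 ≤ i ∧ i ≤ n then -(a i * Lf a b (i - 1) j) else 0))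
      = Cf n a b i j := by
  rcases eq_or_ne j i with rfl | hne1
  · -- diagonal
    by_cases h1 : 1 ≤ j
    · obtain ⟨p, rfl⟩ : ∃ p, j = p + 1 := ⟨j - 1, by omega⟩
      simp only [Cf, Nat.add_sub_cancel, Lf_diag, Lf_up, Lf_down]
      split_ifs <;> first | omega | contradiction | ring
    · have : j = 0 := by omega
      subst this
      simp only [Cf, Nat.zero_sub, Nat.sub_zero, Lf_diag, Lf_up, Lf_down, zero_add]
      split_ifs <;> first | omega | contradiction | ring
  · rcases eq_or_ne j (i + 1) with rfl | hne2
    · -- superdiagonal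
      by_cases h1 : 1 ≤ i
      · obtain ⟨p, rfl⟩ : ∃ p, i = p + 1 := ⟨i - 1, by omega⟩
        have e1 : Lf a b p (p + 1 + 1) = 0 := Lf_up2 a b p
        have e2 : Lf a b (p + 1 + 1 + 1) (p + 1) = 0 := Lf_down2 a b (p + 1)
        have e3 : Lf a b (p + 1) (p + 1 + 1 + 1) = 0 := Lf_up2 a b (p + 1)
        simp only [Cf, Nat.add_sub_cancel, Lf_diag, Lf_up, Lf_down, e1, e2, e3]
        split_ifs <;> first | omega | contradiction | ring
      · have : i = 0 := by omega
        subst this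
        have e3 : Lf a b 0 (0 + 1 + 1) = 0 := Lf_up2 a b 0
        simp only [Cf, Nat.add_sub_cancel, Nat.zero_sub, Lf_diag, Lf_up, Lf_down, e3]
        split_ifs <;> first | omega | contradiction | ring
    · rcases eq_or_ne i (j + 1) with rfl | hne3
      · -- subdiagonal
        have e2 : Lf a b (j + 1 + 1) j = 0 := Lf_down2 a b j
        have e4 : Lf a b (j + 1) (j + 1) = b (j + 1 + 1) := Lf_diag a b (j + 1)
        by_cases h1 : 1 ≤ j
        · have e1 : Lf a b (j + 1) (j - 1) = 0 :=
            Lf_far a b (by omega) (by omega) (by omega)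
          simp only [Cf, Nat.add_sub_cancel, Lf_diag, Lf_down, e1, e2, e4]
          split_ifs <;> first | omega | contradiction | ring
        · have : j = 0 := by omega
          subst this
          simp only [Cf, Nat.add_sub_cancel, Lf_diag, Lf_down, e2, e4]
          split_ifs <;> first | omega | contradiction | ring
      · -- far
        rcases eq_or_ne j (i + 2) with rfl | hne4
        · have e0 : Lf a b i (i + 2 - 1) = a (i + 1) := Lf_up a b i
          have e1 : Lf a b i (i + 2 + 1) = 0 := Lf_far a b (by omega) (by omega) (by omega)
          have e2 : Lf a b (i + 1) (i + 2) = a (i + 1 + 1) := Lf_up a b (i + 1)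
          have e3 : Lf a b (i - 1) (i + 2) = 0 := by
            by_cases h1 : 1 ≤ i
            · exact Lf_far a b (by omega) (by omega) (by omega)
            · have : i = 0 := by omega
              subst this
              exact Lf_far a b (by omega) (by omega) (by omega)
          simp only [Cf, e0, e1, e2, e3]
          split_ifs <;> first | omega | contradiction | ring
        · rcases eq_or_ne i (j + 2) with rfl | hne5
          · have e0 : Lf a b (j + 2) (j - 1) = 0 := by
              by_cases h1 : 1 ≤ j
              · exact Lf_far a b (by omega) (by omega) (by omega)
              · have : j = 0 := by omega
                subst this
                exact Lf_far a b (by omega) (by omega) (by omega)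
            have e1 : Lf a b (j + 2) (j + 1) = a (j + 1 + 1) := Lf_down a b (j + 1)
            have e2 : Lf a b (j + 2 + 1) j = 0 := Lf_far a b (by omega) (by omega) (by omega)
            have e3 : Lf a b (j + 2 - 1) j = a (j + 1) := Lf_down a b j
            simp only [Cf, e0, e1, e2, e3]
            split_ifs <;> first | omega | contradiction | ring
          · have e0 : Lf a b i (j - 1) = 0 := by
              rcases Nat.lt_or_ge i j with hlt | hge
              · exact Lf_far a b (by omega) (by omega) (by omega)
              · exact Lf_far a b (by omega) (by omega) (by omega)
            have e1 : Lf a b i (j + 1) = 0 := by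
              rcases Nat.lt_or_ge i j with hlt | hge
              · exact Lf_far a b (by omega) (by omega) (by omega)
              · exact Lf_far a b (by omega) (by omega) (by omega)
            have e2 : Lf a b (i + 1) j = 0 := by
              rcases Nat.lt_or_ge i j with hlt | hge
              · exact Lf_far a b (by omega) (by omega) (by omega)
              · exact Lf_far a b (by omega) (by omega) (by omega)
            have e3 : Lf a b (i - 1) j = 0 := by
              rcases Nat.lt_or_ge i j with hlt | hge
              · exact Lf_far a b (by omega) (by omega) (by omega)
              · exact Lf_far a b (by omega) (by omega) (by omega)
            simp only [Cf, e0, e1, e2, e3]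
            split_ifs <;> first | omega | contradiction | ring

lemma todaL_apply (n : ℕ) (a b : ℕ → ℝ) (i j : Fin n) :
    todaL n a b i j = Lf a b (i : ℕ) (j : ℕ) := rfl

lemma todaM_apply (n : ℕ) (a : ℕ → ℝ) (i j : Fin n) :
    todaM n a i j = Mf a (i : ℕ) (j : ℕ) := rfl

lemma commEntry (n : ℕ) (a b : ℕ → ℝ) (i j : Fin n) :
    (todaL n a b * todaM n a - todaM n a * todaL n a b) i j
      = Cf n a b (i : ℕ) (j : ℕ) := by
  rw [Matrix.sub_apply, Matrix.mul_apply, Matrix.mul_apply]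
  simp only [todaL_apply, todaM_apply]
  have h1 : ∀ k : ℕ, Lf a b (i : ℕ) k * Mf a k (j : ℕ)
      = (if k + 1 = (j : ℕ) then Lf a b (i : ℕ) k * a (j : ℕ) else 0)
        + (if (j : ℕ) + 1 = k then -(Lf a b (i : ℕ) k * a ((j : ℕ) + 1)) else 0) := by
    intro k
    unfold Mf
    split_ifs <;> first | omega | ring1 | (rename_i hh; rw [hh]; ring1) | (rename_i hh; rw [← hh]; ring1) | (rename_i hA hB; rw [hA]; ring1) | (rename_i hA hB; rw [← hA]; ring1)
  have h2 : ∀ k : ℕ, Mf a (i : ℕ) k * Lf a b k (j : ℕ)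
      = (if (i : ℕ) + 1 = k then a ((i : ℕ) + 1) * Lf a b k (j : ℕ) else 0)
        + (if k + 1 = (i : ℕ) then -(a (i : ℕ) * Lf a b k (j : ℕ)) else 0) := by
    intro k
    unfold Mf
    split_ifs <;> first | omega | ring1 | (rename_i hh; rw [hh]; ring1) | (rename_i hh; rw [← hh]; ring1) | (rename_i hA hB; rw [hA]; ring1) | (rename_i hA hB; rw [← hA]; ring1)
  rw [Fin.sum_univ_eq_sum_range (fun k => Lf a b (i : ℕ) k * Mf a k (j : ℕ)) n,
    Fin.sum_univ_eq_sum_range (fun k => Mf a (i : ℕ) k * Lf a b k (j : ℕ)) n]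
  rw [Finset.sum_congr rfl (fun k _ => h1 k), Finset.sum_congr rfl (fun k _ => h2 k),
    Finset.sum_add_distrib, Finset.sum_add_distrib, sum_shift, sum_pick, sum_pick, sum_shift]
  exact key n (i : ℕ) (j : ℕ) i.isLt j.isLt a b

/-- The Toda system in Flaschka variables is equivalent to the Lax equation
`L̇ = LM - ML`. -/
theorem toda_iff_lax (n : ℕ) (hn : 2 ≤ n) (a b : ℝ → ℕ → ℝ)
    (ha : ∀ k, 1 ≤ k → k ≤ n - 1 → Differentiable ℝ (fun t => a t k))
    (hb : ∀ k, 1 ≤ k → k ≤ n → Differentiable ℝ (fun t => b t k)) :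
    ((∀ k, 1 ≤ k → k ≤ n - 1 → ∀ t : ℝ,
        HasDerivAt (fun s => a s k) (-(a t k) * (b t (k + 1) - b t k)) t)
      ∧ (∀ k, 1 ≤ k → k ≤ n → ∀ t : ℝ,
        HasDerivAt (fun s => b s k)
          (-2 * ((if k ≤ n - 1 then a t k else 0) ^ 2
            - (if 2 ≤ k then a t (k - 1) else 0) ^ 2)) t))
    ↔ (∀ (t : ℝ) (i j : Fin n),
        HasDerivAt (fun s => todaL n (a s) (b s) i j)
          ((todaL n (a t) (b t) * todaM n (a t)
            - todaM n (a t) * todaL n (a t) (b t)) i j) t) := by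
  constructor
  · rintro ⟨hA, hB⟩ t i j
    rw [commEntry]
    by_cases h1 : (i : ℕ) = (j : ℕ)
    · have hf : (fun s => todaL n (a s) (b s) i j) = fun s => b s ((i : ℕ) + 1) := by
        funext s
        rw [todaL_apply]
        unfold Lf
        rw [if_pos h1]
      rw [hf]
      unfold Cf
      rw [if_pos h1]
      exact hB ((i : ℕ) + 1) (by omega) (by omega) t
    · by_cases h2 : (i : ℕ) + 1 = (j : ℕ)
      · have hf : (fun s => todaL n (a s) (b s) i j) = fun s => a s ((i : ℕ) + 1) := by
          funext s
          rw [todaL_apply]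
          unfold Lf
          rw [if_neg h1, if_pos h2]
        rw [hf]
        unfold Cf
        rw [if_neg h1, if_pos h2]
        have hj : (j : ℕ) < n := j.isLt
        exact hA ((i : ℕ) + 1) (by omega) (by omega) t
      · by_cases h3 : (j : ℕ) + 1 = (i : ℕ)
        · have hf : (fun s => todaL n (a s) (b s) i j) = fun s => a s ((j : ℕ) + 1) := by
            funext s
            rw [todaL_apply]
            unfold Lf
            rw [if_neg h1, if_neg h2, if_pos h3]
          rw [hf]
          unfold Cf
          rw [if_neg h1, if_neg h2, if_pos h3]
          have hi : (i : ℕ) < n := i.isLt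
          exact hA ((j : ℕ) + 1) (by omega) (by omega) t
        · have hf : (fun s => todaL n (a s) (b s) i j) = fun _ => (0 : ℝ) := by
            funext s
            rw [todaL_apply]
            unfold Lf
            rw [if_neg h1, if_neg h2, if_neg h3]
          rw [hf]
          unfold Cf
          rw [if_neg h1, if_neg h2, if_neg h3]
          exact hasDerivAt_const t 0
  · intro h
    constructor
    · intro k hk1 hk2 t
      have hkn : k < n := by omega
      have hkn' : k - 1 < n := by omega
      have H := h t ⟨k - 1, hkn'⟩ ⟨k, hkn⟩
      rw [commEntry] at H
      have hcond : k - 1 + 1 = k := by omega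
      have hf : (fun s => todaL n (a s) (b s) ⟨k - 1, hkn'⟩ ⟨k, hkn⟩)
          = fun s => a s k := by
        funext s
        rw [todaL_apply]
        show Lf (a s) (b s) (k - 1) k = a s k
        unfold Lf
        rw [if_neg (by omega), if_pos hcond, hcond]
      rw [hf] at H
      have hc : Cf n (a t) (b t) ((⟨k - 1, hkn'⟩ : Fin n) : ℕ) ((⟨k, hkn⟩ : Fin n) : ℕ)
          = -(a t k) * (b t (k + 1) - b t k) := by
        show Cf n (a t) (b t) (k - 1) k = _
        unfold Cf
        rw [if_neg (by omega), if_pos hcond, hcond]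
      rw [hc] at H
      exact H
    · intro k hk1 hk2 t
      have hkn' : k - 1 < n := by omega
      have H := h t ⟨k - 1, hkn'⟩ ⟨k - 1, hkn'⟩
      rw [commEntry] at H
      have hcond : k - 1 + 1 = k := by omega
      have hf : (fun s => todaL n (a s) (b s) ⟨k - 1, hkn'⟩ ⟨k - 1, hkn'⟩)
          = fun s => b s k := by
        funext s
        rw [todaL_apply]
        show Lf (a s) (b s) (k - 1) (k - 1) = b s k
        unfold Lf
        rw [if_pos rfl, hcond]
      rw [hf] at H
      have hc : Cf n (a t) (b t) ((⟨k - 1, hkn'⟩ : Fin n) : ℕ) ((⟨k - 1, hkn'⟩ : Fin n) : ℕ)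
          = -2 * ((if k ≤ n - 1 then a t k else 0) ^ 2
            - (if 2 ≤ k then a t (k - 1) else 0) ^ 2) := by
        show Cf n (a t) (b t) (k - 1) (k - 1) = _
        unfold Cf
        rw [if_pos rfl, hcond]
      rw [hc] at H
      exact H
end

section
/- Let n ≥ 2 and let a : ℝ → ℝ^{n-1} and b : ℝ → ℝⁿ be differentiable curves. For each t, let L(t) be the symmetric tridiagonal n×n real matrix with diagonal entries L(t)_{kk} = b_k(t), off-diagonal entries L(t)_{k,k+1} = L(t)_{k+1,k} = a_k(t), and all other entries 0, and let D = diag(1, 2, …, n). Then a and b satisfy the Toda system ȧ_k = −a_k(b_{k+1} − b_k) and ḃ_k = −2(a_k² − a_{k-1}²) (convention a_0 = a_n = 0) if and only if L satisfies the double bracket equation L̇(t) = [L(t), [L(t), D]] for all t. -/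
open Matrix

/-- The diagonal matrix `D = diag(1, 2, …, n)`. -/
def todaD (n : ℕ) : Matrix (Fin n) (Fin n) ℝ :=
  Matrix.diagonal fun i : Fin n => ((i : ℕ) + 1 : ℝ)

def todaB (n : ℕ) (a : ℕ → ℝ) : Matrix (Fin n) (Fin n) ℝ :=
  Matrix.of fun i j =>
    if (i : ℕ) + 1 = (j : ℕ) then a ((i : ℕ) + 1)
    else if (j : ℕ) + 1 = (i : ℕ) then -(a ((j : ℕ) + 1))
    else 0

lemma todaB_eq (n : ℕ) (a b : ℕ → ℝ) :
    todaL n a b * todaD n - todaD n * todaL n a b = todaB n a := by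
  ext i j
  simp only [Matrix.sub_apply, todaD, Matrix.mul_diagonal, Matrix.diagonal_mul,
    todaL, todaB, Matrix.of_apply]
  split_ifs <;>
    (first
      | ring1
      | (exfalso; omega)
      | (rename_i h; rw [← h]; push_cast; ring)
      | (rename_i h1 h2 h3; rw [h1]; push_cast; ring))

lemma sum_ite_val {n : ℕ} (m : ℕ) (c : Fin n → ℝ) :
    (∑ k : Fin n, if m = (k : ℕ) then c k else 0) = if h : m < n then c ⟨m, h⟩ else 0 := by
  by_cases h : m < n
  · rw [dif_pos h, Finset.sum_eq_single (⟨m, h⟩ : Fin n)]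
    · simp
    · intro k _ hk
      rw [if_neg]
      intro he
      exact hk (Fin.ext he.symm)
    · simp
  · rw [dif_neg h]
    refine Finset.sum_eq_zero fun k _ => ?_
    rw [if_neg]
    exact fun he => h (he ▸ k.isLt)

lemma sum_ite_succ {n : ℕ} (m : ℕ) (c : Fin n → ℝ) :
    (∑ k : Fin n, if (k : ℕ) + 1 = m then c k else 0)
      = if h : m - 1 < n ∧ 1 ≤ m then c ⟨m - 1, h.1⟩ else 0 := by
  by_cases h : m - 1 < n ∧ 1 ≤ m
  · rw [dif_pos h, Finset.sum_eq_single (⟨m - 1, h.1⟩ : Fin n)]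
    · rw [if_pos (by simp only [Fin.val_mk]; omega)]
    · intro k _ hk
      rw [if_neg]
      intro he
      exact hk (Fin.ext (by simp only [Fin.val_mk]; omega))
    · simp
  · rw [dif_neg h]
    refine Finset.sum_eq_zero fun k _ => ?_
    rw [if_neg]
    intro he
    have := k.isLt
    exact h ⟨by omega, by omega⟩

set_option maxHeartbeats 3200000 in
lemma bracket_apply (n : ℕ) (a b : ℕ → ℝ) (i j : Fin n) :
    (todaL n a b * todaB n a - todaB n a * todaL n a b) i j =
      if (i : ℕ) = (j : ℕ) then
        2 * ((if 1 ≤ (i : ℕ) then a (i : ℕ) else 0) ^ 2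
          - (if (i : ℕ) + 2 ≤ n then a ((i : ℕ) + 1) else 0) ^ 2)
      else if (i : ℕ) + 1 = (j : ℕ) then
        -(a ((i : ℕ) + 1)) * (b ((i : ℕ) + 2) - b ((i : ℕ) + 1))
      else if (j : ℕ) + 1 = (i : ℕ) then
        -(a ((j : ℕ) + 1)) * (b ((j : ℕ) + 2) - b ((j : ℕ) + 1))
      else 0 := by
  have hi := i.isLt
  have hj := j.isLt
  have hLB : ∀ k : Fin n, todaL n a b i k * todaB n a k j
      = (if (i : ℕ) = (k : ℕ) then b ((i : ℕ) + 1) * todaB n a k j else 0)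
      + (if (i : ℕ) + 1 = (k : ℕ) then a ((i : ℕ) + 1) * todaB n a k j else 0)
      + (if (k : ℕ) + 1 = (i : ℕ) then a ((k : ℕ) + 1) * todaB n a k j else 0) := by
    intro k
    simp only [todaL, Matrix.of_apply]
    split_ifs <;> first | ring1 | (exfalso; omega)
  have hBL : ∀ k : Fin n, todaB n a i k * todaL n a b k j
      = (if (i : ℕ) + 1 = (k : ℕ) then a ((i : ℕ) + 1) * todaL n a b k j else 0)
      + (if (k : ℕ) + 1 = (i : ℕ) then -(a ((k : ℕ) + 1)) * todaL n a b k j else 0) := by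
    intro k
    simp only [todaB, Matrix.of_apply]
    split_ifs <;> first | ring1 | (exfalso; omega)
  rw [Matrix.sub_apply, Matrix.mul_apply, Matrix.mul_apply,
    Finset.sum_congr rfl (fun k _ => hLB k), Finset.sum_congr rfl (fun k _ => hBL k),
    Finset.sum_add_distrib, Finset.sum_add_distrib, Finset.sum_add_distrib,
    sum_ite_val, sum_ite_val, sum_ite_succ, sum_ite_val, sum_ite_succ]
  rw [dif_pos hi]
  simp only [todaB, todaL, Matrix.of_apply, Fin.val_mk, Fin.eta]
  by_cases h1 : (j : ℕ) + 1 = (i : ℕ)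
  · rw [← h1]
    split_ifs <;>
      first
        | ring1
        | (exfalso; omega)
        | (rw [show (j : ℕ) + 1 - 1 + 1 = (j : ℕ) + 1 from by omega]; ring1)
  by_cases h2 : (i : ℕ) + 1 = (j : ℕ)
  · rw [← h2]
    split_ifs <;>
      first
        | ring1
        | (exfalso; omega)
        | (rw [show (i : ℕ) - 1 + 1 = (i : ℕ) from by omega]; ring1)
  by_cases h3 : (i : ℕ) = (j : ℕ)
  · rw [← h3]
    split_ifs <;>
      first
        | ring1
        | (exfalso; omega)
        | (rw [show (i : ℕ) - 1 + 1 = (i : ℕ) from by omega]; ring1)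
  · split_ifs <;>
      first
        | ring1
        | (exfalso; omega)
        | (rw [show (i : ℕ) - 1 + 1 = (i : ℕ) from by omega]; ring1)

/-- The Toda system in Flaschka variables is equivalent to the double bracket
equation `L̇ = [L, [L, D]]` with `D = diag(1, …, n)`. -/
theorem toda_iff_double_bracket (n : ℕ) (hn : 2 ≤ n) (a b : ℝ → ℕ → ℝ)
    (ha : ∀ k, 1 ≤ k → k ≤ n - 1 → Differentiable ℝ (fun t => a t k))
    (hb : ∀ k, 1 ≤ k → k ≤ n → Differentiable ℝ (fun t => b t k)) :
    ((∀ k, 1 ≤ k → k ≤ n - 1 → ∀ t : ℝ,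
        HasDerivAt (fun s => a s k) (-(a t k) * (b t (k + 1) - b t k)) t)
      ∧ (∀ k, 1 ≤ k → k ≤ n → ∀ t : ℝ,
        HasDerivAt (fun s => b s k)
          (-2 * ((if k ≤ n - 1 then a t k else 0) ^ 2
            - (if 2 ≤ k then a t (k - 1) else 0) ^ 2)) t))
    ↔ (∀ (t : ℝ) (i j : Fin n),
        HasDerivAt (fun s => todaL n (a s) (b s) i j)
          ((todaL n (a t) (b t) * (todaL n (a t) (b t) * todaD n - todaD n * todaL n (a t) (b t))
            - (todaL n (a t) (b t) * todaD n - todaD n * todaL n (a t) (b t))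
              * todaL n (a t) (b t)) i j) t) := by
  have key : ∀ (t : ℝ) (i j : Fin n),
      (todaL n (a t) (b t) * (todaL n (a t) (b t) * todaD n - todaD n * todaL n (a t) (b t))
        - (todaL n (a t) (b t) * todaD n - todaD n * todaL n (a t) (b t))
          * todaL n (a t) (b t)) i j
      = (if (i : ℕ) = (j : ℕ) then
          2 * ((if 1 ≤ (i : ℕ) then a t (i : ℕ) else 0) ^ 2
            - (if (i : ℕ) + 2 ≤ n then a t ((i : ℕ) + 1) else 0) ^ 2)
        else if (i : ℕ) + 1 = (j : ℕ) then
          -(a t ((i : ℕ) + 1)) * (b t ((i : ℕ) + 2) - b t ((i : ℕ) + 1))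
        else if (j : ℕ) + 1 = (i : ℕ) then
          -(a t ((j : ℕ) + 1)) * (b t ((j : ℕ) + 2) - b t ((j : ℕ) + 1))
        else 0) := by
    intro t i j
    rw [todaB_eq n (a t) (b t)]
    exact bracket_apply n (a t) (b t) i j
  constructor
  · rintro ⟨hA, hB⟩ t i j
    rw [key t i j]
    have hi := i.isLt
    have hj := j.isLt
    by_cases h3 : (i : ℕ) = (j : ℕ)
    · rw [if_pos h3]
      have hfun : (fun s => todaL n (a s) (b s) i j) = fun s => b s ((i : ℕ) + 1) := by
        funext s
        simp only [todaL, Matrix.of_apply, if_pos h3]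
      rw [hfun]
      have hder := hB ((i : ℕ) + 1) (by omega) (by omega) t
      have hval : (-2 * ((if (i : ℕ) + 1 ≤ n - 1 then a t ((i : ℕ) + 1) else 0) ^ 2
            - (if 2 ≤ (i : ℕ) + 1 then a t ((i : ℕ) + 1 - 1) else 0) ^ 2))
          = 2 * ((if 1 ≤ (i : ℕ) then a t (i : ℕ) else 0) ^ 2
            - (if (i : ℕ) + 2 ≤ n then a t ((i : ℕ) + 1) else 0) ^ 2) := by
        rw [show (i : ℕ) + 1 - 1 = (i : ℕ) from by omega]
        split_ifs <;> first | ring1 | (exfalso; omega)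
      rw [← hval]
      exact hder
    · by_cases h1 : (i : ℕ) + 1 = (j : ℕ)
      · rw [if_neg h3, if_pos h1]
        have hfun : (fun s => todaL n (a s) (b s) i j) = fun s => a s ((i : ℕ) + 1) := by
          funext s
          simp only [todaL, Matrix.of_apply, if_neg h3, if_pos h1]
        rw [hfun]
        exact hA ((i : ℕ) + 1) (by omega) (by omega) t
      · by_cases h2 : (j : ℕ) + 1 = (i : ℕ)
        · rw [if_neg h3, if_neg h1, if_pos h2]
          have hfun : (fun s => todaL n (a s) (b s) i j) = fun s => a s ((j : ℕ) + 1) := by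
            funext s
            simp only [todaL, Matrix.of_apply, if_neg h3, if_neg h1, if_pos h2]
          rw [hfun]
          exact hA ((j : ℕ) + 1) (by omega) (by omega) t
        · rw [if_neg h3, if_neg h1, if_neg h2]
          have hfun : (fun s => todaL n (a s) (b s) i j) = fun _ => (0 : ℝ) := by
            funext s
            simp only [todaL, Matrix.of_apply, if_neg h3, if_neg h1, if_neg h2]
          rw [hfun]
          exact hasDerivAt_const t 0
  · intro H
    constructor
    · intro k hk1 hk2 t
      have hkn : k < n := by omega
      have hk1n : k - 1 < n := by omega
      have hder := H t ⟨k - 1, hk1n⟩ ⟨k, hkn⟩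
      rw [key] at hder
      simp only [Fin.val_mk] at hder
      rw [if_neg (by omega), if_pos (by omega),
        show k - 1 + 1 = k from by omega, show k - 1 + 2 = k + 1 from by omega] at hder
      have hfun : (fun s => todaL n (a s) (b s) ⟨k - 1, hk1n⟩ ⟨k, hkn⟩)
          = fun s => a s k := by
        funext s
        simp only [todaL, Matrix.of_apply, Fin.val_mk]
        rw [if_neg (by omega), if_pos (by omega), show k - 1 + 1 = k from by omega]
      rw [hfun] at hder
      exact hder
    · intro k hk1 hk2 t
      have hk1n : k - 1 < n := by omega
      have hder := H t ⟨k - 1, hk1n⟩ ⟨k - 1, hk1n⟩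
      rw [key] at hder
      simp only [Fin.val_mk] at hder
      simp only [if_true] at hder
      have hfun : (fun s => todaL n (a s) (b s) ⟨k - 1, hk1n⟩ ⟨k - 1, hk1n⟩)
          = fun s => b s k := by
        funext s
        simp only [todaL, Matrix.of_apply, Fin.val_mk, if_true]
        rw [show k - 1 + 1 = k from by omega]
      rw [hfun] at hder
      have hval : (2 * ((if 1 ≤ k - 1 then a t (k - 1) else 0) ^ 2
            - (if k - 1 + 2 ≤ n then a t (k - 1 + 1) else 0) ^ 2))
          = -2 * ((if k ≤ n - 1 then a t k else 0) ^ 2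
            - (if 2 ≤ k then a t (k - 1) else 0) ^ 2) := by
        rw [show k - 1 + 1 = k from by omega]
        split_ifs <;> first | ring1 | (exfalso; omega)
      rw [hval] at hder
      exact hder
end

section
/- Let a, b : ℝ × ℝ → ℝ be continuously differentiable functions of (t, z), and define L : ℝ × ℝ² → ℝ by L(t, z, φ) = b(t, z) + 2a(t, z)cos(φ). For differentiable F, G : ℝ² → ℝ let {F, G}(z, φ) = (∂F/∂φ)(∂G/∂z) − (∂F/∂z)(∂G/∂φ), and let π_z(z,φ) = z. Then the double bracket equation ∂L/∂t(t, z, φ) = −{L(t,·,·), {L(t,·,·), π_z}}(z, φ) holds for all (t, z, φ) if and only if a and b satisfy the dispersionless Toda system: ∂a/∂t(t,z) = −a(t,z)·∂b/∂z(t,z) and ∂b/∂t(t,z) = −2·∂(a²)/∂z(t,z) for all (t, z). -/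
/-!
With `L = b + 2a cos φ`, the inner bracket is `{L, z} = ∂L/∂φ = -2a sin φ`, and then
`{L, {L, z}} = 4a a_z (sin² φ + cos² φ) + 2a b_z cos φ = 4a a_z + 2a b_z cos φ`.
Both sides of the double bracket equation are therefore of the form `p + q cos φ`, and
comparing coefficients (evaluate at `φ = 0` and `φ = π/2`) gives `b_t = -4a a_z = -2(a²)_z`
and `a_t = -a b_z`.
-/

open Real

noncomputable def poissonBracket (F G : ℝ → ℝ → ℝ) (z φ : ℝ) : ℝ :=
  deriv (fun φ' => F z φ') φ * deriv (fun z' => G z' φ) z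
    - deriv (fun z' => F z' φ) z * deriv (fun φ' => G z φ') φ

theorem poissonBracket_coord_right (F : ℝ → ℝ → ℝ) (z φ : ℝ) :
    poissonBracket F (fun z' _ => z') z φ = deriv (F z) φ := by
  simp [poissonBracket]

theorem deriv_add_two_mul_cos {A B : ℝ → ℝ} {x : ℝ} (hA : DifferentiableAt ℝ A x)
    (hB : DifferentiableAt ℝ B x) (φ : ℝ) :
    deriv (fun x' => B x' + 2 * A x' * cos φ) x = deriv B x + 2 * deriv A x * cos φ := by
  rw [deriv_fun_add hB (by fun_prop), deriv_mul_const_field, deriv_const_mul_field]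

theorem deriv_const_add_two_mul_cos (c d φ : ℝ) :
    deriv (fun φ' => c + 2 * d * cos φ') φ = -(2 * d * sin φ) := by
  simp

theorem poissonBracket_toda_coord {A B : ℝ → ℝ} :
    poissonBracket (fun z φ => B z + 2 * A z * cos φ) (fun z' _ => z')
      = fun z φ => -(2 * A z * sin φ) := by
  funext z φ
  rw [poissonBracket_coord_right, deriv_const_add_two_mul_cos]

theorem poissonBracket_toda_poissonBracket_toda_coord {A B : ℝ → ℝ} {z : ℝ}
    (hA : DifferentiableAt ℝ A z) (hB : DifferentiableAt ℝ B z) (φ : ℝ) :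
    poissonBracket (fun z φ => B z + 2 * A z * cos φ)
        (poissonBracket (fun z φ => B z + 2 * A z * cos φ) (fun z' _ => z')) z φ
      = 4 * A z * deriv A z + 2 * A z * deriv B z * cos φ := by
  rw [poissonBracket_toda_coord, poissonBracket, deriv_const_add_two_mul_cos,
    deriv_add_two_mul_cos hA hB]
  have hsin : deriv (fun φ' => -(2 * A z * sin φ')) φ = -(2 * A z * cos φ) := by simp
  have hz : deriv (fun z' => -(2 * A z' * sin φ)) z = -(2 * deriv A z * sin φ) := by
    simp [deriv_mul_const_field, deriv_const_mul_field]
  rw [hsin, hz]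
  linear_combination 4 * A z * deriv A z * sin_sq_add_cos_sq φ

theorem forall_add_mul_cos_eq_iff {p q r s : ℝ} :
    (∀ φ, p + q * cos φ = r + s * cos φ) ↔ p = r ∧ q = s := by
  refine ⟨fun h => ?_, fun ⟨hp, hq⟩ _ => by rw [hp, hq]⟩
  have h0 := h 0
  have h1 := h (π / 2)
  simp only [cos_zero, cos_pi_div_two, mul_one, mul_zero, add_zero] at h0 h1
  exact ⟨h1, by linarith⟩

/-- For `L(t,z,φ) = b(t,z) + 2a(t,z)cos φ`, the double bracket equation
`∂L/∂t = -{L, {L, z}}` is equivalent to the dispersionless Toda system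
`∂a/∂t = -a ∂b/∂z`, `∂b/∂t = -2 ∂(a²)/∂z`. -/
theorem dispersionless_toda_iff_double_bracket (a b : ℝ × ℝ → ℝ)
    (ha : ContDiff ℝ 1 a) (hb : ContDiff ℝ 1 b) :
    (∀ t z φ : ℝ,
      deriv (fun t' => b (t', z) + 2 * a (t', z) * cos φ) t
        = -(poissonBracket (fun z' φ' => b (t, z') + 2 * a (t, z') * cos φ')
            (poissonBracket (fun z' φ' => b (t, z') + 2 * a (t, z') * cos φ')
              (fun z' _ => z')) z φ))
    ↔ (∀ t z : ℝ,
      deriv (fun t' => a (t', z)) t = -(a (t, z)) * deriv (fun z' => b (t, z')) z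
      ∧ deriv (fun t' => b (t', z)) t = -2 * deriv (fun z' => (a (t, z')) ^ 2) z) := by
  have da := ha.differentiable one_ne_zero
  have db := hb.differentiable one_ne_zero
  refine forall_congr' fun t => forall_congr' fun z => ?_
  have hat : DifferentiableAt ℝ (fun t' => a (t', z)) t := by fun_prop
  have hbt : DifferentiableAt ℝ (fun t' => b (t', z)) t := by fun_prop
  have haz : DifferentiableAt ℝ (fun z' => a (t, z')) z := by fun_prop
  have hbz : DifferentiableAt ℝ (fun z' => b (t, z')) z := by fun_prop
  simp only [deriv_add_two_mul_cos hat hbt, poissonBracket_toda_poissonBracket_toda_coord haz hbz,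
    deriv_fun_pow haz, Nat.cast_ofNat, Nat.reduceSub, pow_one, neg_add, ← neg_mul,
    forall_add_mul_cos_eq_iff]
  constructor <;> rintro ⟨h1, h2⟩ <;> constructor <;> linarith
end
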